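/- arXiv:1912.08570 — 2 statements merged into one kernel-verified Lean document; each statement's English description precedes it below -/
import Mathlib

section
/- Let m be a nonzero integer, S an open subset of {(ρ,z) ∈ ℝ² : ρ > 0}, and u = (u_ρ, u_z, u_θ) : S → ℝ³ continuously differentiable on S. Then at every point of S one has η_{m,2}(curl^m u) = C(η_{m,1}(u)); explicitly, the vector (−(m/ρ) u_z − ∂_z u_θ, (1/ρ)(u_θ + m u_ρ) + ∂_ρ u_θ, −∂_ρ((m/ρ) u_z) + ∂_z((1/ρ)(m u_ρ + u_θ))) equals C applied to ((1/ρ)(m u_ρ + u_θ), (m/ρ) u_z, u_θ). (Curl part of the lemma stating that the operators η_{m,k} intertwine the mode-m cylindrical operators with the Cartesian operators.) -/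
/-! Expanding both sides by the product rule for `∂_ρ` and `∂_z`, with `∂_ρ (c / ρ) = -c / ρ²` and
`∂_z (c / ρ) = 0`, turns the identity into field arithmetic at `ρ ≠ 0`. -/

/-- Partial derivative in the first (ρ) direction. -/
noncomputable def pdRho (f : ℝ × ℝ → ℝ) (p : ℝ × ℝ) : ℝ := fderiv ℝ f p (1, 0)

/-- Partial derivative in the second (z) direction. -/
noncomputable def pdZ (f : ℝ × ℝ → ℝ) (p : ℝ × ℝ) : ℝ := fderiv ℝ f p (0, 1)

section PartialDerivatives

variable {f g : ℝ × ℝ → ℝ} {p : ℝ × ℝ}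

theorem pdRho_mul (hf : DifferentiableAt ℝ f p) (hg : DifferentiableAt ℝ g p) :
    pdRho (fun x => f x * g x) p = f p * pdRho g p + g p * pdRho f p := by
  simp [pdRho, fderiv_fun_mul hf hg]

theorem pdZ_mul (hf : DifferentiableAt ℝ f p) (hg : DifferentiableAt ℝ g p) :
    pdZ (fun x => f x * g x) p = f p * pdZ g p + g p * pdZ f p := by
  simp [pdZ, fderiv_fun_mul hf hg]

theorem pdZ_add (hf : DifferentiableAt ℝ f p) (hg : DifferentiableAt ℝ g p) :
    pdZ (fun x => f x + g x) p = pdZ f p + pdZ g p := by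
  simp [pdZ, fderiv_fun_add hf hg]

theorem pdZ_const_mul (hf : DifferentiableAt ℝ f p) (c : ℝ) :
    pdZ (fun x => c * f x) p = c * pdZ f p := by
  simp [pdZ, fderiv_const_mul hf c]

theorem pdRho_fst : pdRho (fun x => x.1) p = 1 := by
  simp [pdRho, hasFDerivAt_fst.fderiv]

theorem pdRho_comp_fst {h : ℝ → ℝ} {h' : ℝ} (hh : HasDerivAt h h' p.1) :
    pdRho (fun x => h x.1) p = h' := by
  have hfd := hh.comp_hasFDerivAt p (hasFDerivAt_fst (𝕜 := ℝ) (p := p))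
  simp [pdRho, ← Function.comp_def h Prod.fst, hfd.fderiv]

theorem pdZ_comp_fst {h : ℝ → ℝ} (hh : DifferentiableAt ℝ h p.1) :
    pdZ (fun x => h x.1) p = 0 := by
  have hfd := hh.hasDerivAt.comp_hasFDerivAt p (hasFDerivAt_fst (𝕜 := ℝ) (p := p))
  simp [pdZ, ← Function.comp_def h Prod.fst, hfd.fderiv]

end PartialDerivatives

theorem eta_intertwines_curl_general (m : ℤ) (S : Set (ℝ × ℝ)) (hS : IsOpen S)
    (hSpos : ∀ p ∈ S, 0 < p.1) (u1 u2 u3 : ℝ × ℝ → ℝ)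
    (hu1 : ContDiffOn ℝ 1 u1 S) (hu2 : ContDiffOn ℝ 1 u2 S) (hu3 : ContDiffOn ℝ 1 u3 S) :
    ∀ q ∈ S,
      -- η_{m,2} applied to curl^m (u1, u2, u3)
      (-(((m : ℝ) / q.1) * u2 q) - pdZ u3 q,
        (1 / q.1) * (pdRho (fun p => p.1 * u3 p) q + (m : ℝ) * u1 q),
        (1 / q.1) * ((m : ℝ) * (pdZ u1 q - pdRho u2 q)
          - (-(((m : ℝ) / q.1) * u2 q) - pdZ u3 q)))
      -- C applied to η_{m,1}(u1, u2, u3)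
      = (-(((m : ℝ) / q.1) * u2 q) - pdZ u3 q,
         (1 / q.1) * ((m : ℝ) * u1 q + u3 q) + pdRho u3 q,
         pdZ (fun p => (1 / p.1) * ((m : ℝ) * u1 p + u3 p)) q
           - pdRho (fun p => ((m : ℝ) / p.1) * u2 p) q) := by
  intro q hq
  have hρ : q.1 ≠ 0 := (hSpos q hq).ne'
  have hdiff {u : ℝ × ℝ → ℝ} (hu : ContDiffOn ℝ 1 u S) : DifferentiableAt ℝ u q :=
    (hu.contDiffAt (hS.mem_nhds hq)).differentiableAt one_ne_zero
  have hd1 := hdiff hu1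
  have hd2 := hdiff hu2
  have hd3 := hdiff hu3
  have hdiv (c : ℝ) : HasDerivAt (fun r : ℝ => c / r) (-c / q.1 ^ 2) q.1 := by
    simpa [div_eq_mul_inv, neg_div] using (hasDerivAt_inv hρ).const_mul c
  have hdivq (c : ℝ) : DifferentiableAt ℝ (fun x : ℝ × ℝ => c / x.1) q :=
    (hdiv c).differentiableAt.comp q differentiableAt_fst
  rw [pdRho_mul differentiableAt_fst hd3, pdRho_fst,
    pdZ_mul (hdivq 1) (by fun_prop), pdZ_add (by fun_prop) hd3,
    pdZ_const_mul hd1, pdZ_comp_fst (hdiv 1).differentiableAt,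
    pdRho_mul (hdivq _) hd2, pdRho_comp_fst (hdiv _)]
  ext <;> field_simp <;> ring

/-- Curl part of the intertwining lemma: `η_{m,2}(curl^m u) = C(η_{m,1}(u))`. -/
theorem eta_intertwines_curl (m : ℤ) (hm : m ≠ 0) (S : Set (ℝ × ℝ)) (hS : IsOpen S)
    (hSpos : ∀ p ∈ S, 0 < p.1) (u1 u2 u3 : ℝ × ℝ → ℝ)
    (hu1 : ContDiffOn ℝ 1 u1 S) (hu2 : ContDiffOn ℝ 1 u2 S) (hu3 : ContDiffOn ℝ 1 u3 S) :
    ∀ q ∈ S,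
      -- η_{m,2} applied to curl^m (u1, u2, u3)
      (-(((m : ℝ) / q.1) * u2 q) - pdZ u3 q,
        (1 / q.1) * (pdRho (fun p => p.1 * u3 p) q + (m : ℝ) * u1 q),
        (1 / q.1) * ((m : ℝ) * (pdZ u1 q - pdRho u2 q)
          - (-(((m : ℝ) / q.1) * u2 q) - pdZ u3 q)))
      -- C applied to η_{m,1}(u1, u2, u3)
      = (-(((m : ℝ) / q.1) * u2 q) - pdZ u3 q,
         (1 / q.1) * ((m : ℝ) * u1 q + u3 q) + pdRho u3 q,
         pdZ (fun p => (1 / p.1) * ((m : ℝ) * u1 p + u3 p)) q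
           - pdRho (fun p => ((m : ℝ) / p.1) * u2 p) q) :=
  eta_intertwines_curl_general m S hS hSpos u1 u2 u3 hu1 hu2 hu3
end

section
/- Let m be a nonzero integer, S an open subset of {(ρ,z) ∈ ℝ² : ρ > 0}, and ṽ = (ṽ₁, ṽ₂, ṽ₃) : S → ℝ³ with ṽ₁, ṽ₂ continuously differentiable on S. Then at every point of S, div^m(η_{m,2}^{-1}(ṽ)) = ∂_ρ ṽ₁ − ṽ₃ + ∂_z ṽ₂ = D(ṽ). (Divergence part of the lemma stating that the inverse maps η_{m,k}^{-1} intertwine the Cartesian operators with the mode-m cylindrical operators.) -/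
theorem pdRho_fst_mul {f : ℝ × ℝ → ℝ} {q : ℝ × ℝ} (hf : DifferentiableAt ℝ f q) :
    pdRho (fun p => p.1 * f p) q = f q + q.1 * pdRho f q := by
  simp only [pdRho, fderiv_fun_mul differentiableAt_fst hf, fderiv_fst]
  simp only [add_apply, smul_apply, ContinuousLinearMap.coe_fst', smul_eq_mul, mul_one]
  ring

theorem eta_inv_intertwines_div_general (m : ℤ) (hm : m ≠ 0) (S : Set (ℝ × ℝ)) (hS : IsOpen S)
    (hSpos : ∀ p ∈ S, 0 < p.1) (v1 v2 v3 : ℝ × ℝ → ℝ)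
    (hv1 : ContDiffOn ℝ 1 v1 S) :
    ∀ q ∈ S,
      ((1 / q.1) * pdRho (fun p => p.1 * v1 p) q
          - ((m : ℝ) / q.1) * ((q.1 * v3 q + v1 q) / (m : ℝ)) + pdZ v2 q
        = pdRho v1 q - v3 q + pdZ v2 q)
      ∧ (pdRho v1 q - v3 q + pdZ v2 q = pdRho v1 q + pdZ v2 q - v3 q) := by
  intro q hq
  have hρ : q.1 ≠ 0 := (hSpos q hq).ne'
  have hm' : (m : ℝ) ≠ 0 := Int.cast_ne_zero.mpr hm
  have hv1q : DifferentiableAt ℝ v1 q :=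
    (hv1.differentiableOn one_ne_zero).differentiableAt (hS.mem_nhds hq)
  refine ⟨?_, by ring⟩
  rw [pdRho_fst_mul hv1q]
  field_simp
  ring

/-- Divergence part of the inverse intertwining lemma:
`div^m(η_{m,2}^{-1}(ṽ)) = ∂_ρ ṽ₁ − ṽ₃ + ∂_z ṽ₂ = D(ṽ)`. -/
theorem eta_inv_intertwines_div (m : ℤ) (hm : m ≠ 0) (S : Set (ℝ × ℝ)) (hS : IsOpen S)
    (hSpos : ∀ p ∈ S, 0 < p.1) (v1 v2 v3 : ℝ × ℝ → ℝ)
    (hv1 : ContDiffOn ℝ 1 v1 S) (hv2 : ContDiffOn ℝ 1 v2 S) :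
    ∀ q ∈ S,
      ((1 / q.1) * pdRho (fun p => p.1 * v1 p) q
          - ((m : ℝ) / q.1) * ((q.1 * v3 q + v1 q) / (m : ℝ)) + pdZ v2 q
        = pdRho v1 q - v3 q + pdZ v2 q)
      ∧ (pdRho v1 q - v3 q + pdZ v2 q = pdRho v1 q + pdZ v2 q - v3 q) :=
  eta_inv_intertwines_div_general m hm S hS hSpos v1 v2 v3 hv1
end
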